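/- In a directed acyclic graph with edge weights w such that the in-weights at each node sum to at most 1, under the linear threshold model with uniform random thresholds, the activation probability satisfies the linear recurrence ap(x) = Σ_{u ∈ N_in(x)} w_{ux} · ap(u) for every non-seed node x, with ap(s) = 1 for seed nodes s. -/

import Mathlib

open MeasureTheory

/-- There is a walk of length `n` (number of edges) from `u` to `w` along relation `E`. -/
inductive PathLen {V : Type*} (E : V → V → Prop) : V → V → ℕ → Prop
  | refl (v : V) : PathLen E v v 0
  | tail {u v w : V} {n : ℕ} : PathLen E u v n → E v w → PathLen E u w (n + 1)

/-- One step of the deterministic linear threshold diffusion with weights `w`,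
thresholds `θ`, and current active set `A`. -/
noncomputable def ltStep {V : Type*} [Fintype V] (w : V → V → ℝ) (θ : V → ℝ)
    (A : Set V) : Set V :=
  A ∪ {v | θ v ≤ ∑ u : V, A.indicator (fun u => w u v) u}

/-- The activation probability of `x` in the LT model with seed set `S`, where each
vertex's threshold is drawn independently and uniformly from `[0,1]`. -/
noncomputable def ap {V : Type*} [Fintype V] (w : V → V → ℝ) (S : Set V) (x : V) : ℝ :=
  ((Measure.pi fun _ : V => volume.restrict (Set.Icc (0 : ℝ) 1))
    {θ : V → ℝ | x ∈ ⋃ t : ℕ, (ltStep w θ)^[t] S}).toReal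

/-! Once the diffusion has stabilised, a non-seed vertex `x` is active exactly when `θ x` is at
most the weight flowing into `x` from the active set. By acyclicity no in-neighbour of `x` is
reachable from `x`, so this in-weight does not depend on `θ x`. Integrating out the uniform
threshold `θ x` first, the probability that `x` is active is the expected in-weight, which is
`∑ u, w u x * ap u` by linearity of expectation. -/

open Set Function
open scoped ENNReal

section InWeight

variable {V : Type*} [Fintype V] (w : V → V → ℝ)

noncomputable def inWeight (A : Set V) (v : V) : ℝ := ∑ u, A.indicator (fun u => w u v) u

lemma mem_ltStep {θ : V → ℝ} {A : Set V} {v : V} :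
    v ∈ ltStep w θ A ↔ v ∈ A ∨ θ v ≤ inWeight w A v :=
  Iff.rfl

lemma inWeight_congr {A B : Set V} {v : V} (h : ∀ u, w u v ≠ 0 → (u ∈ A ↔ u ∈ B)) :
    inWeight w A v = inWeight w B v := by
  classical
  refine Finset.sum_congr rfl fun u _ => ?_
  by_cases hu : w u v = 0
  · simp only [indicator_apply, hu, ite_self]
  · simp only [indicator_apply, h u hu]

variable {w}

lemma inWeight_nonneg (hw : ∀ u v, 0 ≤ w u v) (A : Set V) (v : V) : 0 ≤ inWeight w A v :=
  Finset.sum_nonneg fun u _ => indicator_nonneg (fun u _ => hw u v) u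

lemma inWeight_le_one (hw : ∀ u v, 0 ≤ w u v) (hw1 : ∀ v, ∑ u, w u v ≤ 1) (A : Set V) (v : V) :
    inWeight w A v ≤ 1 :=
  (Finset.sum_le_sum fun u _ => indicator_le_self' (fun u _ => hw u v) u).trans (hw1 v)

lemma inWeight_mono (hw : ∀ u v, 0 ≤ w u v) {A B : Set V} (hAB : A ⊆ B) (v : V) :
    inWeight w A v ≤ inWeight w B v :=
  Finset.sum_le_sum fun u _ => indicator_le_indicator_of_subset hAB (fun u => hw u v) u

variable {Ω : Type*} [MeasurableSpace Ω] {A : Ω → Set V}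

lemma measurable_inWeight (hA : ∀ u, MeasurableSet {ω | u ∈ A ω}) (v : V) :
    Measurable fun ω => inWeight w (A ω) v :=
  Finset.measurable_sum _ fun u _ => measurable_const.indicator (hA u)

lemma integral_inWeight (μ : Measure Ω) [IsFiniteMeasure μ]
    (hA : ∀ u, MeasurableSet {ω | u ∈ A ω}) (v : V) :
    ∫ ω, inWeight w (A ω) v ∂μ = ∑ u, w u v * μ.real {ω | u ∈ A ω} := by
  have hsummand : ∀ u, (fun ω => (A ω).indicator (fun u => w u v) u)
      = {ω | u ∈ A ω}.indicator fun _ => w u v := fun u => rfl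
  simp only [inWeight]
  rw [integral_finsetSum _ fun u _ => by
    rw [hsummand]; exact (integrable_const (w u v)).indicator (hA u)]
  refine Finset.sum_congr rfl fun u _ => ?_
  rw [hsummand, integral_indicator_const _ (hA u), smul_eq_mul, mul_comm]

end InWeight

section Diffusion

variable {V : Type*} [Fintype V] (w : V → V → ℝ) (S : Set V)

def activeSet (θ : V → ℝ) : Set V := ⋃ t : ℕ, (ltStep w θ)^[t] S

lemma monotone_iterate_ltStep (θ : V → ℝ) : Monotone fun t => (ltStep w θ)^[t] S :=
  monotone_nat_of_le_succ fun t => by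
    rw [iterate_succ_apply']
    exact subset_union_left

-- The iterates increase in the finite lattice `Set V`, so they stabilise.
lemma ltStep_activeSet_subset (θ : V → ℝ) : ltStep w θ (activeSet w S θ) ⊆ activeSet w S θ := by
  have hstab := WellFoundedGT.iSup_eq_monotonicSequenceLimit ⟨_, monotone_iterate_ltStep w S θ⟩
  obtain ⟨T, hT⟩ : ∃ T, activeSet w S θ = (ltStep w θ)^[T] S := ⟨_, hstab⟩
  calc ltStep w θ (activeSet w S θ) = (ltStep w θ)^[T + 1] S := by rw [hT, iterate_succ_apply']
    _ ⊆ activeSet w S θ := subset_iUnion (fun t => (ltStep w θ)^[t] S) _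

variable {w}

lemma mem_activeSet_iff (hw : ∀ u v, 0 ≤ w u v) (θ : V → ℝ) (x : V) :
    x ∈ activeSet w S θ ↔ x ∈ S ∨ θ x ≤ inWeight w (activeSet w S θ) x := by
  constructor
  · intro hx
    obtain ⟨t, ht⟩ := mem_iUnion.1 hx
    induction t with
    | zero => exact Or.inl ht
    | succ t ih =>
      rw [iterate_succ_apply', mem_ltStep] at ht
      refine ht.elim ih fun h => Or.inr (h.trans (inWeight_mono hw ?_ x))
      exact subset_iUnion (fun t => (ltStep w θ)^[t] S) t
  · rintro (hx | hx)
    · exact mem_iUnion.2 ⟨0, hx⟩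
    · exact ltStep_activeSet_subset w S θ (Or.inr hx)

lemma measurableSet_setOf_mem_iterate_ltStep (t : ℕ) (u : V) :
    MeasurableSet {θ : V → ℝ | u ∈ (ltStep w θ)^[t] S} := by
  induction t generalizing u with
  | zero => exact MeasurableSet.const _
  | succ t ih =>
    simp only [iterate_succ_apply', mem_ltStep, ofPred_or]
    exact (ih u).union <|
      measurableSet_le (measurable_pi_apply u) (measurable_inWeight ih u)

lemma measurableSet_setOf_mem_activeSet (u : V) :
    MeasurableSet {θ : V → ℝ | u ∈ activeSet w S θ} := by
  simp only [activeSet, mem_iUnion, ofPred_exists]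
  exact MeasurableSet.iUnion fun t => measurableSet_setOf_mem_iterate_ltStep S t u

lemma mem_iterate_ltStep_congr {x : V} {θ θ' : V → ℝ} (hθ : ∀ v, v ≠ x → θ v = θ' v) (t : ℕ)
    {u : V} (hu : ∀ n, ¬ PathLen (fun a b => w a b ≠ 0) x u n) :
    u ∈ (ltStep w θ)^[t] S ↔ u ∈ (ltStep w θ')^[t] S := by
  induction t generalizing u with
  | zero => exact Iff.rfl
  | succ t ih =>
    have hux : u ≠ x := by
      rintro rfl
      exact hu 0 (PathLen.refl u)
    have hin : inWeight w ((ltStep w θ)^[t] S) u = inWeight w ((ltStep w θ')^[t] S) u :=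
      inWeight_congr w fun v hv => ih fun n hp => hu (n + 1) (hp.tail hv)
    simp only [iterate_succ_apply', mem_ltStep, hin, hθ u hux, ih hu]

lemma mem_activeSet_congr {x : V} {θ θ' : V → ℝ} (hθ : ∀ v, v ≠ x → θ v = θ' v) {u : V}
    (hu : ∀ n, ¬ PathLen (fun a b => w a b ≠ 0) x u n) :
    u ∈ activeSet w S θ ↔ u ∈ activeSet w S θ' := by
  simp only [activeSet, mem_iUnion]
  exact exists_congr fun t => mem_iterate_ltStep_congr S hθ t hu

lemma inWeight_activeSet_congr {x : V} (hx : ∀ n, ¬ PathLen (fun a b => w a b ≠ 0) x x (n + 1))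
    {θ θ' : V → ℝ} (hθ : ∀ v, v ≠ x → θ v = θ' v) :
    inWeight w (activeSet w S θ) x = inWeight w (activeSet w S θ') x :=
  inWeight_congr w fun _ hu => mem_activeSet_congr S hθ fun n hp => hx n (hp.tail hu)

end Diffusion

instance isProbabilityMeasure_restrict_unitInterval :
    IsProbabilityMeasure (volume.restrict (Icc (0 : ℝ) 1)) :=
  ⟨by simp [Real.volume_Icc]⟩

noncomputable abbrev uniformCube (ι : Type*) [Fintype ι] : Measure (ι → ℝ) :=
  Measure.pi fun _ => volume.restrict (Icc (0 : ℝ) 1)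

lemma volume_restrict_unitInterval_Iic {a : ℝ} (ha : a ∈ Icc (0 : ℝ) 1) :
    volume.restrict (Icc (0 : ℝ) 1) (Iic a) = ENNReal.ofReal a := by
  rw [Measure.restrict_apply measurableSet_Iic, inter_comm, ← Ici_inter_Iic, inter_assoc,
    Iic_inter_Iic, min_eq_right ha.2, Ici_inter_Iic, Real.volume_Icc, sub_zero]

-- Integrating out `θ i` first: given the other coordinates, `θ i ≤ F θ` has probability `F θ`.
lemma measureReal_uniformCube_setOf_apply_le {ι : Type*} [Fintype ι] [DecidableEq ι] (i : ι)
    {F : (ι → ℝ) → ℝ} (hF : Measurable F) (hF0 : ∀ θ, 0 ≤ F θ) (hF1 : ∀ θ, F θ ≤ 1)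
    (hFi : ∀ θ r, F (update θ i r) = F θ) :
    (uniformCube ι).real {θ | θ i ≤ F θ} = ∫ θ, F θ ∂uniformCube ι := by
  have hmeas : MeasurableSet {θ : ι → ℝ | θ i ≤ F θ} := measurableSet_le (measurable_pi_apply i) hF
  have hlin : ∫⁻ θ, {θ : ι → ℝ | θ i ≤ F θ}.indicator 1 θ ∂uniformCube ι
      = ∫⁻ θ, ENNReal.ofReal (F θ) ∂uniformCube ι := by
    refine lintegral_eq_of_lmarginal_eq {i} (measurable_const.indicator hmeas) hF.ennreal_ofReal ?_
    ext θ
    have hslice : {θ : ι → ℝ | θ i ≤ F θ}.indicator (1 : (ι → ℝ) → ℝ≥0∞) ∘ update θ i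
        = (Iic (F θ)).indicator 1 := by
      ext r
      simp only [comp_apply, indicator, mem_ofPred_eq, update_self, hFi, mem_Iic, Pi.one_apply]
    simp only [lmarginal_singleton, hFi, lintegral_const, measure_univ, mul_one]
    rw [← comp_def, hslice, lintegral_indicator_one measurableSet_Iic,
      volume_restrict_unitInterval_Iic ⟨hF0 θ, hF1 θ⟩]
  have hint : Integrable F (uniformCube ι) :=
    (integrable_const (1 : ℝ)).mono' hF.aestronglyMeasurable <| ae_of_all _ fun θ => by
      rw [Real.norm_eq_abs, abs_of_nonneg (hF0 θ)]
      exact hF1 θ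
  rw [measureReal_def, ← lintegral_indicator_one hmeas, hlin,
    ← ofReal_integral_eq_lintegral_ofReal hint (ae_of_all _ hF0),
    ENNReal.toReal_ofReal (integral_nonneg hF0)]

section ActivationProbability

variable {V : Type*} [Fintype V] {w : V → V → ℝ} {S : Set V}

lemma ap_eq_measureReal (x : V) :
    ap w S x = (uniformCube V).real {θ | x ∈ activeSet w S θ} :=
  rfl

lemma ap_of_mem {s : V} (hs : s ∈ S) : ap w S s = 1 := by
  have huniv : {θ : V → ℝ | s ∈ activeSet w S θ} = univ :=
    eq_univ_of_forall fun _ => mem_iUnion.2 ⟨0, hs⟩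
  rw [ap_eq_measureReal, huniv, probReal_univ]

lemma ap_eq_sum_of_notMem (hw : ∀ u v, 0 ≤ w u v) (hw1 : ∀ v, ∑ u, w u v ≤ 1) {x : V}
    (hx : x ∉ S) (hacyc : ∀ n, ¬ PathLen (fun u v => w u v ≠ 0) x x (n + 1)) :
    ap w S x = ∑ u, w u x * ap w S u := by
  classical
  have hactive : {θ : V → ℝ | x ∈ activeSet w S θ}
      = {θ | θ x ≤ inWeight w (activeSet w S θ) x} := by
    ext θ
    simp only [mem_ofPred_eq, mem_activeSet_iff S hw, hx, false_or]
  calc ap w S x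
      = (uniformCube V).real {θ | θ x ≤ inWeight w (activeSet w S θ) x} := by
        rw [ap_eq_measureReal, hactive]
    _ = ∫ θ, inWeight w (activeSet w S θ) x ∂uniformCube V :=
        measureReal_uniformCube_setOf_apply_le x
          (measurable_inWeight (measurableSet_setOf_mem_activeSet S) x)
          (fun _ => inWeight_nonneg hw _ x) (fun _ => inWeight_le_one hw hw1 _ x)
          fun θ r => inWeight_activeSet_congr S hacyc fun v hv => update_of_ne hv r θ
    _ = ∑ u, w u x * ap w S u := integral_inWeight _ (measurableSet_setOf_mem_activeSet S) x

end ActivationProbability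

/-- In a DAG with in-weights summing to at most 1, LT activation probabilities satisfy
the linear recurrence `ap(x) = ∑_u w_{ux} · ap(u)` for non-seed nodes `x`, with
`ap(s) = 1` for seeds. -/
theorem stmt11 {V : Type*} [Fintype V] (w : V → V → ℝ) (S : Set V)
    (hw : ∀ u v, 0 ≤ w u v) (hw1 : ∀ v, (∑ u, w u v) ≤ 1)
    (hdag : ∀ (x : V) (n : ℕ), 0 < n → ¬ PathLen (fun u v => w u v ≠ 0) x x n) :
    (∀ s ∈ S, ap w S s = 1) ∧
    (∀ x, x ∉ S → ap w S x = ∑ u, w u x * ap w S u) :=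
  ⟨fun _ hs => ap_of_mem hs,
    fun x hx => ap_eq_sum_of_notMem hw hw1 hx fun n => hdag x (n + 1) n.succ_pos⟩
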